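/- Let I₁, I₂ ⊆ ℝ be nonempty open intervals, D = (1/2)(I₁+I₂), and φ : D → ℝ with zero set Z_φ closed in D. Suppose φ((x+y)/2)(f₁(x) − f₂(y)) = 0 for all x ∈ I₁, y ∈ I₂, the triplet is not extremal, and f₂ is constant with value λ while f₁ is not constant. Then there exists a countable family (Uₙ) of pairwise disjoint nonempty open subintervals of I₁ such that f₁ ≡ λ on ⋃ₙ Uₙ and φ(u) = 0 for all u ∈ (1/2)(𝒦₁ + I₂), where 𝒦₁ = I₁ \ ⋃ₙ Uₙ. -/
import Mathlib

/-- The set `(1/2)(A + B) = {(a+b)/2 : a ∈ A, b ∈ B}`. -/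
def halfSum (A B : Set ℝ) : Set ℝ := {u | ∃ a ∈ A, ∃ b ∈ B, u = (a + b) / 2}

theorem structure_of_nonextremal_solutions_one_constant (I₁ I₂ : Set ℝ)
    (hI₁o : IsOpen I₁) (hI₁c : I₁.OrdConnected) (hI₁n : I₁.Nonempty)
    (hI₂o : IsOpen I₂) (hI₂c : I₂.OrdConnected) (hI₂n : I₂.Nonempty)
    (φ f₁ f₂ : ℝ → ℝ) (lam : ℝ)
    (hZclosed : closure {u ∈ halfSum I₁ I₂ | φ u = 0} ∩ halfSum I₁ I₂ ⊆
      {u ∈ halfSum I₁ I₂ | φ u = 0})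
    (heq : ∀ x ∈ I₁, ∀ y ∈ I₂, φ ((x + y) / 2) * (f₁ x - f₂ y) = 0)
    (hnotext : ¬ ((∀ u ∈ halfSum I₁ I₂, φ u = 0) ∨
      ∃ c : ℝ, (∀ x ∈ I₁, f₁ x = c) ∧ (∀ y ∈ I₂, f₂ y = c)))
    (hf₂const : ∀ y ∈ I₂, f₂ y = lam)
    (hf₁nc : ¬ ∃ c : ℝ, ∀ x ∈ I₁, f₁ x = c) :
    ∃ 𝒰 : Set (Set ℝ), 𝒰.Countable ∧
      (∀ U ∈ 𝒰, IsOpen U ∧ U.Nonempty ∧ U.OrdConnected ∧ U ⊆ I₁) ∧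
      𝒰.Pairwise Disjoint ∧
      (∀ x ∈ ⋃₀ 𝒰, f₁ x = lam) ∧
      (∀ u ∈ halfSum (I₁ \ ⋃₀ 𝒰) I₂, φ u = 0) := by
  set S : Set ℝ := {x | x ∈ I₁ ∧ f₁ x = lam} with hS
  set V : Set ℝ := interior S with hV
  have hVo : IsOpen V := isOpen_interior
  have hVS : V ⊆ S := interior_subset
  set 𝒰 : Set (Set ℝ) := {C | ∃ x ∈ V, C = connectedComponentIn V x} with h𝒰
  have hprops : ∀ U ∈ 𝒰, IsOpen U ∧ U.Nonempty ∧ U.OrdConnected ∧ U ⊆ I₁ := by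
    rintro U ⟨x, hx, rfl⟩
    refine ⟨hVo.connectedComponentIn, ⟨x, mem_connectedComponentIn hx⟩,
      isPreconnected_connectedComponentIn.ordConnected, ?_⟩
    exact (connectedComponentIn_subset V x).trans (hVS.trans fun z hz => hz.1)
  have hdisj : 𝒰.Pairwise Disjoint := by
    rintro U₁ ⟨x, hx, rfl⟩ U₂ ⟨y, hy, rfl⟩ hne
    rw [Set.disjoint_left]
    intro z hz₁ hz₂
    have e1 := connectedComponentIn_eq hz₁
    have e2 := connectedComponentIn_eq hz₂
    exact hne (e1.trans e2.symm)
  have hunion : ⋃₀ 𝒰 = V := by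
    apply Set.Subset.antisymm
    · rintro z ⟨U, ⟨x, hx, rfl⟩, hz⟩
      exact connectedComponentIn_subset V x hz
    · intro z hz
      exact ⟨connectedComponentIn V z, ⟨z, hz, rfl⟩, mem_connectedComponentIn hz⟩
  refine ⟨𝒰, ?_, hprops, hdisj, ?_, ?_⟩
  · have hpd : 𝒰.PairwiseDisjoint id := fun U hU W hW h => hdisj hU hW h
    exact hpd.countable_of_isOpen (fun U hU => (hprops U hU).1)
      (fun U hU => (hprops U hU).2.1)
  · intro x hx
    rw [hunion] at hx
    exact (hVS hx).2
  · rintro u ⟨x, hx, y, hy, rfl⟩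
    rw [hunion] at hx
    have hxI : x ∈ I₁ := hx.1
    have hmem : (x + y) / 2 ∈ halfSum I₁ I₂ := ⟨x, hxI, y, hy, rfl⟩
    by_cases hfx : f₁ x = lam
    · -- x ∈ S \ interior S, so x is a limit of points of I₁ with f₁ ≠ lam
      have hxcl : x ∈ closure Sᶜ := by
        rw [closure_compl]
        exact hx.2
      refine (hZclosed ⟨?_, hmem⟩).2
      have key : x ∈ closure {z | z ∈ I₁ ∧ f₁ z ≠ lam} := by
        rw [mem_closure_iff_nhds] at hxcl ⊢
        intro t ht
        obtain ⟨z, hzt, hzS⟩ := hxcl (t ∩ I₁) (Filter.inter_mem ht (hI₁o.mem_nhds hxI))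
        refine ⟨z, hzt.1, hzt.2, fun h => hzS ⟨hzt.2, h⟩⟩
      have hcont : Continuous fun z : ℝ => (z + y) / 2 := by continuity
      have := (Set.mapsTo_image _ _).closure hcont (x := x) key
      refine closure_mono ?_ this
      rintro w ⟨z, ⟨hzI, hzne⟩, rfl⟩
      have h0 := heq z hzI y hy
      rw [hf₂const y hy] at h0
      rcases mul_eq_zero.1 h0 with h | h
      · exact ⟨⟨z, hzI, y, hy, rfl⟩, h⟩
      · exact absurd (by linarith) hzne
    · have h0 := heq x hxI y hy
      rw [hf₂const y hy] at h0
      rcases mul_eq_zero.1 h0 with h | h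
      · exact h
      · exact absurd (by linarith) hfx
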